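/- arXiv:1210.2141 — 2 statements merged into one kernel-verified Lean document; each statement's English description precedes it below -/
import Mathlib

section
/- Let α, β > −1, let n ≥ 1 be an integer, and let j ∈ {0, 1}. Then |σ_{n,j}^{α,β}| ≤ 2 √( γ_0^{α,β} / γ_n^{α,β} ). -/
noncomputable section

/-- Jacobi polynomial `J_n^{α,β}(x)` (explicit hypergeometric formula). -/
def jacobi (α β : ℝ) (n : ℕ) (x : ℝ) : ℝ :=
  ∑ k ∈ Finset.range (n + 1),
    (Real.Gamma (n + α + 1) / ((n - k).factorial * Real.Gamma (α + k + 1))) *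
      (Real.Gamma (n + β + 1) / (k.factorial * Real.Gamma ((n : ℝ) + β - k + 1))) *
      ((x - 1) / 2) ^ k * ((x + 1) / 2) ^ (n - k)

/-- Jacobi weight `ω^{α,β}(x) = (1-x)^α (1+x)^β`. -/
def jweight (α β x : ℝ) : ℝ := (1 - x) ^ α * (1 + x) ^ β

/-- Normalization factor `γ_n^{α,β}`. -/
def gamJ (α β : ℝ) (n : ℕ) : ℝ :=
  2 ^ (α + β + 1) * Real.Gamma (n + α + 1) * Real.Gamma (n + β + 1) /
    ((2 * n + α + β + 1) * n.factorial * Real.Gamma (n + α + β + 1))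

/-- `γ_0^{α,β} = 2^(α+β+1) Γ(α+1) Γ(β+1) / Γ(α+β+2)`. -/
def gamJ0 (α β : ℝ) : ℝ :=
  2 ^ (α + β + 1) * Real.Gamma (α + 1) * Real.Gamma (β + 1) / Real.Gamma (α + β + 2)

/-- Chebyshev polynomial of the second kind evaluated at a real point. -/
def chebU (m : ℕ) (x : ℝ) : ℝ := (Polynomial.Chebyshev.U ℝ (m : ℤ)).eval x

/-- Chebyshev polynomial of the first kind evaluated at a real point. -/
def chebT (m : ℕ) (x : ℝ) : ℝ := (Polynomial.Chebyshev.T ℝ (m : ℤ)).eval x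

/-- `σ_{n,j}^{α,β}`. -/
def sigmaJ (α β : ℝ) (n j : ℕ) : ℝ :=
  (1 / gamJ α β n) * ∫ x in (-1 : ℝ)..1, chebU (n + j) x * jacobi α β n x * jweight α β x

/-- Closed region bounded by the Bernstein ellipse `E_ρ`. -/
def bernsteinSet (ρ : ℝ) : Set ℂ :=
  {z | ∃ w : ℂ, 1 ≤ ‖w‖ ∧ ‖w‖ ≤ ρ ∧ z = (w + w⁻¹) / 2}

/-- `u ∈ A_ρ` : `u` is analytic on an open set containing the closed Bernstein ellipse region. -/
def InA (ρ : ℝ) (u : ℂ → ℂ) : Prop :=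
  ∃ s : Set ℂ, IsOpen s ∧ bernsteinSet ρ ⊆ s ∧ DifferentiableOn ℂ u s

/-- Parametrization `z(θ)` of the Bernstein ellipse `E_ρ`. -/
def bcurve (ρ θ : ℝ) : ℂ :=
  ((ρ : ℂ) * Complex.exp (θ * Complex.I) + (ρ : ℂ)⁻¹ * Complex.exp (-θ * Complex.I)) / 2

/-- Derivative `z'(θ)` of the Bernstein-ellipse parametrization. -/
def bcurve' (ρ θ : ℝ) : ℂ :=
  ((ρ : ℂ) * Complex.I * Complex.exp (θ * Complex.I)
      - (ρ : ℂ)⁻¹ * Complex.I * Complex.exp (-θ * Complex.I)) / 2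

/-- Jacobi expansion coefficient `û_n^{α,β}` of `u`. -/
def uhatJ (α β : ℝ) (n : ℕ) (u : ℂ → ℂ) : ℂ :=
  (1 / gamJ α β n : ℝ) *
    ∫ x in (-1 : ℝ)..1, u x * (jacobi α β n x : ℂ) * (jweight α β x : ℂ)

end

noncomputable section

/-!
Write `J = J_n^{α,β}`, `ω = ω^{α,β}`. Since `U_{m+2} = 2 T_{m+2} + U_m` and `J` is orthogonal to
every polynomial of degree `< n`, for `j ≤ 1` we get `γ_n σ_{n,j} = 2 ∫ T_{n+j} J ω`. By
Cauchy–Schwarz and `|T_{n+j}| ≤ 1` on `[-1, 1]` this is at most `2 √(∫ ω) √(∫ J² ω)`, and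
`∫ ω = γ_0`, `∫ J² ω = γ_n`.

Orthogonality and the norm both come from the moments `∫ ((x+1)/2)^m J ω` with `m ≤ n`. Expanding
`J` termwise turns them into beta integrals, and the resulting sum over `k` is an `n`-th forward
difference of a polynomial of degree `m`, which vanishes for `m < n`. In the variable `(x+1)/2`
the leading coefficient of `J` is `binom(2n+α+β, n)` by Chu–Vandermonde.
-/

open MeasureTheory Polynomial Finset
open scoped Nat

theorem Real.Gamma_add_nat_eq_mul_ascPochhammer {z : ℝ} (hz : 0 < z) (k : ℕ) :
    Real.Gamma (z + k) = Real.Gamma z * (ascPochhammer ℝ k).eval z := by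
  induction k with
  | zero => simp
  | succ k ih =>
    rw [Nat.cast_succ, ← add_assoc, Real.Gamma_add_one (by positivity), ih,
      ascPochhammer_succ_eval]
    ring

theorem Real.choose_eq_Gamma_div {x : ℝ} {k : ℕ} (h : 0 < x - k + 1) :
    Ring.choose x k = Real.Gamma (x + 1) / (k ! * Real.Gamma (x - k + 1)) := by
  have hΓ := Real.Gamma_add_nat_eq_mul_ascPochhammer h k
  rw [show x - k + 1 + k = x + 1 by ring] at hΓ
  rw [Ring.choose_eq_smul, descPochhammer_smeval_eq_ascPochhammer, ascPochhammer_smeval_eq_eval,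
    hΓ, smul_eq_mul]
  have : Real.Gamma (x - k + 1) ≠ 0 := (Real.Gamma_pos_of_pos h).ne'
  field_simp

theorem Polynomial.fwdDiff_iter_eval_eq_coeff_mul_factorial {R : Type*} [CommRing R] {P : R[X]}
    {n : ℕ} (hP : P.natDegree ≤ n) (y : R) :
    (fwdDiff 1)^[n] P.eval y = P.coeff n * n ! := by
  rcases hP.lt_or_eq with hlt | rfl
  · rw [P.fwdDiff_iter_eq_zero_of_degree_lt hlt, coeff_eq_zero_of_natDegree_lt hlt]
    simp
  · rw [P.fwdDiff_iter_degree_eq_factorial, Pi.smul_apply, smul_eq_mul, leadingCoeff]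
    rfl

theorem Polynomial.sum_neg_one_pow_mul_choose_mul_eval {R : Type*} [CommRing R] {P : R[X]}
    {n : ℕ} (hP : P.natDegree ≤ n) :
    ∑ k ∈ range (n + 1), (-1) ^ k * n.choose k * P.eval (k : R)
      = (-1) ^ n * n ! * P.coeff n := by
  have h := fwdDiff_iter_eq_sum_shift (1 : R) P.eval n 0
  rw [fwdDiff_iter_eval_eq_coeff_mul_factorial hP] at h
  rw [mul_assoc, mul_comm (n ! : R), h, mul_sum]
  refine sum_congr rfl fun k hk => ?_
  have hkn : k ≤ n := Nat.lt_succ_iff.mp (mem_range.mp hk)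
  rw [zsmul_eq_mul, nsmul_one, zero_add]
  have hsign : (-1 : R) ^ n = (-1) ^ k * (-1) ^ (n - k) := by
    rw [← pow_add, Nat.add_sub_cancel' hkn]
  have hsq : (-1 : R) ^ (n - k) * (-1) ^ (n - k) = 1 := by
    rw [← mul_pow]; simp
  push_cast
  rw [hsign]
  linear_combination (-(-1) ^ k * (n.choose k : R) * P.eval (k : R)) * hsq

theorem Polynomial.natDegree_ascPochhammer_comp_C_sub_X {R : Type*} [CommRing R] [IsDomain R]
    (m : ℕ) (c : R) : ((ascPochhammer R m).comp (C c - X)).natDegree = m := by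
  rw [natDegree_comp, ascPochhammer_natDegree, ← neg_sub, natDegree_neg, natDegree_X_sub_C,
    mul_one]

theorem Polynomial.leadingCoeff_ascPochhammer_comp_C_sub_X {R : Type*} [CommRing R] [IsDomain R]
    (m : ℕ) (c : R) : ((ascPochhammer R m).comp (C c - X)).leadingCoeff = (-1) ^ m := by
  rw [leadingCoeff_comp (by rw [← neg_sub, natDegree_neg, natDegree_X_sub_C]; exact one_ne_zero),
    (monic_ascPochhammer R m).leadingCoeff, ascPochhammer_natDegree, one_mul, ← neg_sub,
    leadingCoeff_neg, leadingCoeff_X_sub_C]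

theorem Polynomial.monic_X_sub_C_pow_mul_X_pow {R : Type*} [CommRing R] (c : R) (k l : ℕ) :
    ((X - C c) ^ k * X ^ l).Monic :=
  ((monic_X_sub_C c).pow k).mul (monic_X.pow l)

theorem Polynomial.natDegree_X_sub_C_pow_mul_X_pow {R : Type*} [CommRing R] [Nontrivial R]
    (c : R) (k l : ℕ) : ((X - C c) ^ k * X ^ l).natDegree = k + l := by
  rw [((monic_X_sub_C c).pow k).natDegree_mul (monic_X.pow l), (monic_X_sub_C c).natDegree_pow,
    natDegree_X_sub_C, natDegree_X_pow, mul_one]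

theorem Real.integral_rpow_mul_one_sub_rpow {u v : ℝ} (hu : 0 < u) (hv : 0 < v) :
    ∫ t in (0 : ℝ)..1, t ^ (u - 1) * (1 - t) ^ (v - 1)
      = Real.Gamma u * Real.Gamma v / Real.Gamma (u + v) := by
  have hB : Complex.betaIntegral u v
      = ((∫ t in (0 : ℝ)..1, t ^ (u - 1) * (1 - t) ^ (v - 1) : ℝ) : ℂ) := by
    rw [Complex.betaIntegral, ← intervalIntegral.integral_ofReal]
    refine intervalIntegral.integral_congr fun t ht => ?_
    rw [Set.uIcc_of_le zero_le_one] at ht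
    simp only [Complex.ofReal_mul]
    rw [Complex.ofReal_cpow ht.1, Complex.ofReal_cpow (sub_nonneg.mpr ht.2)]
    push_cast
    rfl
  have h := Complex.Gamma_mul_Gamma_eq_betaIntegral (s := u) (t := v) (by simpa using hu)
    (by simpa using hv)
  rw [hB, ← Complex.ofReal_add, Complex.Gamma_ofReal, Complex.Gamma_ofReal, Complex.Gamma_ofReal,
    ← Complex.ofReal_mul, ← Complex.ofReal_mul, Complex.ofReal_inj] at h
  rw [h, mul_div_cancel_left₀ _ (Real.Gamma_pos_of_pos (add_pos hu hv)).ne']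

theorem integral_one_sub_rpow_mul_one_add_rpow {a b : ℝ} (ha : -1 < a) (hb : -1 < b) :
    ∫ x in (-1 : ℝ)..1, (1 - x) ^ a * (1 + x) ^ b
      = 2 ^ (a + b + 1) * Real.Gamma (a + 1) * Real.Gamma (b + 1) / Real.Gamma (a + b + 2) := by
  have hsub := intervalIntegral.integral_comp_mul_add (a := 0) (b := 1)
    (fun x : ℝ => (1 - x) ^ a * (1 + x) ^ b) two_ne_zero (-1)
  rw [show (2 : ℝ) * 0 + -1 = -1 by norm_num, show (2 : ℝ) * 1 + -1 = 1 by norm_num,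
    smul_eq_mul] at hsub
  have hbeta : ∫ t in (0 : ℝ)..1, (1 - (2 * t + -1)) ^ a * (1 + (2 * t + -1)) ^ b
      = 2 ^ (a + b) * ∫ t in (0 : ℝ)..1, t ^ ((b + 1) - 1) * (1 - t) ^ ((a + 1) - 1) := by
    rw [← intervalIntegral.integral_const_mul]
    refine intervalIntegral.integral_congr fun t ht => ?_
    rw [Set.uIcc_of_le zero_le_one] at ht
    simp only [add_sub_cancel_right]
    rw [show 1 - (2 * t + -1) = 2 * (1 - t) by ring, show 1 + (2 * t + -1) = 2 * t by ring,
      Real.mul_rpow zero_le_two (sub_nonneg.mpr ht.2), Real.mul_rpow zero_le_two ht.1,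
      Real.rpow_add two_pos]
    ring
  rw [Real.integral_rpow_mul_one_sub_rpow (by linarith) (by linarith)] at hbeta
  rw [eq_inv_mul_iff_mul_eq₀ two_ne_zero, hbeta] at hsub
  rw [← hsub, show b + 1 + (a + 1) = a + b + 2 by ring, Real.rpow_add_one two_ne_zero]
  ring

theorem sq_integral_mul_mul_le {a b : ℝ} (hab : a ≤ b) {f g w : ℝ → ℝ}
    (hw : ∀ x ∈ Set.Icc a b, 0 ≤ w x)
    (hff : IntervalIntegrable (fun x => f x * f x * w x) volume a b)
    (hfg : IntervalIntegrable (fun x => f x * g x * w x) volume a b)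
    (hgg : IntervalIntegrable (fun x => g x * g x * w x) volume a b) :
    (∫ x in a..b, f x * g x * w x) ^ 2
      ≤ (∫ x in a..b, f x * f x * w x) * ∫ x in a..b, g x * g x * w x := by
  set A := ∫ x in a..b, f x * f x * w x
  set B := ∫ x in a..b, f x * g x * w x
  set C := ∫ x in a..b, g x * g x * w x
  have hquad : ∀ t : ℝ, 0 ≤ A * (t * t) + 2 * B * t + C := fun t => by
    have hexp : ∫ x in a..b, (t * f x + g x) * (t * f x + g x) * w x
        = t * t * A + 2 * t * B + C := by
      rw [← intervalIntegral.integral_const_mul, ← intervalIntegral.integral_const_mul,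
        ← intervalIntegral.integral_add (hff.const_mul _) (hfg.const_mul _),
        ← intervalIntegral.integral_add ((hff.const_mul _).add (hfg.const_mul _)) hgg]
      exact intervalIntegral.integral_congr fun x _ => by ring
    rw [show A * (t * t) + 2 * B * t + C = t * t * A + 2 * t * B + C by ring, ← hexp]
    exact intervalIntegral.integral_nonneg hab fun x hx =>
      mul_nonneg (mul_self_nonneg _) (hw x hx)
  have := discrim_le_zero hquad
  rw [discrim] at this
  linarith

section Jacobi

variable {α β : ℝ}

theorem jweight_nonneg (α β : ℝ) {x : ℝ} (hx : x ∈ Set.Icc (-1 : ℝ) 1) :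
    0 ≤ jweight α β x :=
  mul_nonneg (Real.rpow_nonneg (by linarith [hx.2]) _) (Real.rpow_nonneg (by linarith [hx.1]) _)

theorem intervalIntegrable_mul_jweight (hα : -1 < α) (hβ : -1 < β) {g : ℝ → ℝ}
    (hg : Continuous g) :
    IntervalIntegrable (fun x => g x * jweight α β x) volume (-1) 1 := by
  have hleft : IntervalIntegrable (fun x => g x * jweight α β x) volume (-1) 0 := by
    have hsing : IntervalIntegrable (fun x : ℝ => (1 + x) ^ β) volume (-1) 0 := by
      simpa [add_comm] using
        (intervalIntegral.intervalIntegrable_rpow' (a := 0) (b := 1) hβ).comp_add_right 1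
    refine (hsing.continuousOn_mul (g := fun x => g x * (1 - x) ^ α) ?_).congr ?_
    · refine hg.continuousOn.mul (ContinuousOn.rpow_const (by fun_prop) fun x hx => Or.inl ?_)
      rw [Set.uIcc_of_le (by norm_num)] at hx
      linarith [hx.2]
    · exact fun x _ => by simp only [jweight]; ring
  have hright : IntervalIntegrable (fun x => g x * jweight α β x) volume 0 1 := by
    have hsing : IntervalIntegrable (fun x : ℝ => (1 - x) ^ α) volume 0 1 := by
      simpa using
        ((intervalIntegral.intervalIntegrable_rpow' (a := 0) (b := 1) hα).comp_sub_left 1).symm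
    refine (hsing.continuousOn_mul (g := fun x => g x * (1 + x) ^ β) ?_).congr ?_
    · refine hg.continuousOn.mul (ContinuousOn.rpow_const (by fun_prop) fun x hx => Or.inl ?_)
      rw [Set.uIcc_of_le (by norm_num)] at hx
      linarith [hx.1]
    · exact fun x _ => by simp only [jweight]; ring
  exact hleft.trans hright

theorem integral_jweight (hα : -1 < α) (hβ : -1 < β) :
    ∫ x in (-1 : ℝ)..1, jweight α β x = gamJ0 α β := by
  rw [gamJ0, ← integral_one_sub_rpow_mul_one_add_rpow hα hβ]
  rfl

theorem integral_pow_mul_pow_mul_jweight (hα : -1 < α) (hβ : -1 < β) (k l : ℕ) :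
    ∫ x in (-1 : ℝ)..1, ((1 - x) / 2) ^ k * ((x + 1) / 2) ^ l * jweight α β x
      = 2 ^ (α + β + 1) * Real.Gamma (α + k + 1) * Real.Gamma (β + l + 1)
          / Real.Gamma (α + β + k + l + 2) := by
  have hpt : ∀ᵐ x ∂volume, x ∈ Set.uIoc (-1 : ℝ) 1 →
      ((1 - x) / 2) ^ k * ((x + 1) / 2) ^ l * jweight α β x
        = 2⁻¹ ^ (k + l) * ((1 - x) ^ (α + k) * (1 + x) ^ (β + l)) := by
    filter_upwards [Measure.ae_ne volume (1 : ℝ)] with x hx1 hx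
    rw [Set.uIoc_of_le (by norm_num)] at hx
    have h1 : 0 < 1 - x := sub_pos.mpr (lt_of_le_of_ne hx.2 hx1)
    have h2 : 0 < 1 + x := by linarith [hx.1]
    rw [jweight, Real.rpow_add_natCast h1.ne', Real.rpow_add_natCast h2.ne', div_pow, div_pow,
      inv_pow, pow_add]
    ring
  rw [intervalIntegral.integral_congr_ae hpt, intervalIntegral.integral_const_mul,
    integral_one_sub_rpow_mul_one_add_rpow (by linarith [(k.cast_nonneg : (0 : ℝ) ≤ k)])
      (by linarith [(l.cast_nonneg : (0 : ℝ) ≤ l)])]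
  rw [show α + k + (β + l) + 1 = α + β + 1 + ((k + l : ℕ) : ℝ) by push_cast; ring,
    show α + k + (β + l) + 2 = α + β + k + l + 2 by ring, Real.rpow_add_natCast two_ne_zero,
    inv_pow]
  field_simp

def jacobiCoeff (α β : ℝ) (n k : ℕ) : ℝ :=
  Real.Gamma (n + α + 1) / ((n - k).factorial * Real.Gamma (α + k + 1)) *
    (Real.Gamma (n + β + 1) / (k.factorial * Real.Gamma ((n : ℝ) + β - k + 1)))

theorem jacobi_eq_sum_jacobiCoeff (α β : ℝ) (n : ℕ) (x : ℝ) :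
    jacobi α β n x
      = ∑ k ∈ range (n + 1),
          jacobiCoeff α β n k * ((x - 1) / 2) ^ k * ((x + 1) / 2) ^ (n - k) :=
  rfl

@[fun_prop]
theorem continuous_jacobi (α β : ℝ) (n : ℕ) : Continuous (jacobi α β n) := by
  unfold jacobi
  fun_prop

@[fun_prop]
theorem continuous_chebT (m : ℕ) : Continuous (chebT m) :=
  (Chebyshev.T ℝ m).continuous

theorem jacobiCoeff_mul_Gamma_mul_Gamma (hα : -1 < α) (hβ : -1 < β) {n k : ℕ} (hk : k ≤ n)
    (m : ℕ) :
    jacobiCoeff α β n k * Real.Gamma (α + k + 1) * Real.Gamma (β + (n - k + m : ℕ) + 1)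
      = Real.Gamma (n + α + 1) * Real.Gamma (n + β + 1) / n ! *
          (n.choose k * ((ascPochhammer ℝ m).comp (C (n + β + 1) - X)).eval (k : ℝ)) := by
  have hkn : (k : ℝ) ≤ n := by exact_mod_cast hk
  have hz : 0 < (n : ℝ) + β - k + 1 := by linarith
  have hΓ := Real.Gamma_add_nat_eq_mul_ascPochhammer hz m
  rw [show (n : ℝ) + β - k + 1 + m = β + (n - k + m : ℕ) + 1 by push_cast [hk]; ring] at hΓ
  have hchoose : (n.choose k : ℝ) * k ! * (n - k)! = n ! := by
    exact_mod_cast Nat.choose_mul_factorial_mul_factorial hk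
  have hΓα : Real.Gamma (α + k + 1) ≠ 0 :=
    (Real.Gamma_pos_of_pos (by linarith [Nat.cast_nonneg (α := ℝ) k])).ne'
  have hnk : (n.choose k : ℝ) ≠ 0 := by exact_mod_cast (Nat.choose_pos hk).ne'
  rw [hΓ, eval_comp, eval_sub, eval_C, eval_X,
    show (n : ℝ) + β + 1 - k = n + β - k + 1 by ring,
    jacobiCoeff, ← hchoose]
  field_simp

theorem integral_pow_mul_jacobi_mul_jweight_eq_sum (hα : -1 < α) (hβ : -1 < β) (n m : ℕ) :
    ∫ x in (-1 : ℝ)..1, ((x + 1) / 2) ^ m * jacobi α β n x * jweight α β x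
      = 2 ^ (α + β + 1) * Real.Gamma (n + α + 1) * Real.Gamma (n + β + 1)
          / (n ! * Real.Gamma (α + β + n + m + 2)) *
        ∑ k ∈ range (n + 1), (-1) ^ k * n.choose k *
          ((ascPochhammer ℝ m).comp (C (n + β + 1) - X)).eval (k : ℝ) := by
  have hpt : ∀ x, ((x + 1) / 2) ^ m * jacobi α β n x * jweight α β x
      = ∑ k ∈ range (n + 1), jacobiCoeff α β n k * (-1) ^ k *
          (((1 - x) / 2) ^ k * ((x + 1) / 2) ^ (n - k + m) * jweight α β x) := by
    intro x
    rw [jacobi_eq_sum_jacobiCoeff, mul_sum, sum_mul]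
    refine sum_congr rfl fun k _ => ?_
    rw [show (x - 1) / 2 = -((1 - x) / 2) by ring, neg_pow, pow_add]
    ring
  simp_rw [hpt]
  rw [intervalIntegral.integral_finsetSum fun k _ =>
    (intervalIntegrable_mul_jweight hα hβ (by fun_prop)).const_mul _, mul_sum]
  simp_rw [intervalIntegral.integral_const_mul, integral_pow_mul_pow_mul_jweight hα hβ]
  refine sum_congr rfl fun k hk => ?_
  have hkn : k ≤ n := Nat.lt_succ_iff.mp (mem_range.mp hk)
  rw [show α + β + k + (n - k + m : ℕ) + 2 = α + β + n + m + 2 by push_cast [hkn]; ring]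
  calc _ = 2 ^ (α + β + 1) / Real.Gamma (α + β + n + m + 2) * (-1) ^ k *
        (jacobiCoeff α β n k * Real.Gamma (α + k + 1) * Real.Gamma (β + (n - k + m : ℕ) + 1)) := by
        ring
    _ = _ := by rw [jacobiCoeff_mul_Gamma_mul_Gamma hα hβ hkn]; ring

/- The sum in `integral_pow_mul_jacobi_mul_jweight_eq_sum` is, up to sign, the `n`-th forward
difference of a polynomial of degree `m` with leading coefficient `(-1) ^ m`. -/
theorem integral_pow_mul_jacobi_mul_jweight (hα : -1 < α) (hβ : -1 < β) {n m : ℕ}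
    (hm : m ≤ n) :
    ∫ x in (-1 : ℝ)..1, ((x + 1) / 2) ^ m * jacobi α β n x * jweight α β x
      = if m = n then
          2 ^ (α + β + 1) * Real.Gamma (n + α + 1) * Real.Gamma (n + β + 1)
            / Real.Gamma (2 * n + α + β + 2)
        else 0 := by
  have hP := natDegree_ascPochhammer_comp_C_sub_X m ((n : ℝ) + β + 1)
  rw [integral_pow_mul_jacobi_mul_jweight_eq_sum hα hβ,
    sum_neg_one_pow_mul_choose_mul_eval (hP.trans_le hm)]
  split_ifs with hmn
  · subst hmn
    have hsign : (-1 : ℝ) ^ m * m ! * (-1) ^ m = m ! := by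
      rw [mul_right_comm, ← mul_pow]; simp
    have hlead := leadingCoeff_ascPochhammer_comp_C_sub_X m ((m : ℝ) + β + 1)
    rw [leadingCoeff, hP] at hlead
    rw [hlead, hsign, show α + β + (m : ℝ) + m + 2 = 2 * m + α + β + 2 by ring]
    field_simp
  · rw [coeff_eq_zero_of_natDegree_lt (hP.trans_lt (lt_of_le_of_ne hm hmn)), mul_zero, mul_zero]

theorem integral_eval_mul_jacobi_mul_jweight (hα : -1 < α) (hβ : -1 < β) {n : ℕ} {Q : ℝ[X]}
    (hQ : Q.natDegree ≤ n) :
    ∫ x in (-1 : ℝ)..1, Q.eval ((x + 1) / 2) * jacobi α β n x * jweight α β x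
      = Q.coeff n * (2 ^ (α + β + 1) * Real.Gamma (n + α + 1) * Real.Gamma (n + β + 1)
          / Real.Gamma (2 * n + α + β + 2)) := by
  have hpt : ∀ x, Q.eval ((x + 1) / 2) * jacobi α β n x * jweight α β x
      = ∑ i ∈ range (n + 1),
          Q.coeff i * (((x + 1) / 2) ^ i * jacobi α β n x * jweight α β x) := by
    intro x
    rw [eval_eq_sum_range' (Nat.lt_succ_of_le hQ), sum_mul, sum_mul]
    exact sum_congr rfl fun i _ => by ring
  simp_rw [hpt]
  rw [intervalIntegral.integral_finsetSum fun i _ =>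
    (intervalIntegrable_mul_jweight hα hβ (by fun_prop)).const_mul _]
  simp_rw [intervalIntegral.integral_const_mul]
  rw [sum_congr rfl fun i hi => by
    rw [integral_pow_mul_jacobi_mul_jweight hα hβ (Nat.lt_succ_iff.mp (mem_range.mp hi))]]
  simp

theorem integral_eval_mul_jacobi_mul_jweight_of_natDegree_lt (hα : -1 < α) (hβ : -1 < β)
    {n : ℕ} {P : ℝ[X]} (hP : P.natDegree < n) :
    ∫ x in (-1 : ℝ)..1, P.eval x * jacobi α β n x * jweight α β x = 0 := by
  have hQ : (P.comp (C 2 * X + C (-1))).natDegree < n :=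
    (natDegree_comp_le.trans (mul_le_of_le_one_right (Nat.zero_le _) natDegree_linear_le)).trans_lt
      hP
  have h := integral_eval_mul_jacobi_mul_jweight hα hβ hQ.le
  rw [coeff_eq_zero_of_natDegree_lt hQ, zero_mul] at h
  simpa [eval_comp, mul_div_cancel₀] using h

def jacobiPoly (α β : ℝ) (n : ℕ) : ℝ[X] :=
  ∑ k ∈ range (n + 1), C (jacobiCoeff α β n k) * ((X - C 1) ^ k * X ^ (n - k))

theorem jacobi_eq_eval_jacobiPoly (α β : ℝ) (n : ℕ) (x : ℝ) :
    jacobi α β n x = (jacobiPoly α β n).eval ((x + 1) / 2) := by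
  simp only [jacobi_eq_sum_jacobiCoeff, jacobiPoly, eval_finsetSum, eval_mul, eval_C, eval_pow,
    eval_sub, eval_X, show (x + 1) / 2 - 1 = (x - 1) / 2 by ring, mul_assoc]

theorem natDegree_jacobiPoly_le (α β : ℝ) (n : ℕ) : (jacobiPoly α β n).natDegree ≤ n := by
  refine natDegree_sum_le_of_forall_le _ _ fun k hk => natDegree_C_mul_le _ _ |>.trans ?_
  rw [natDegree_X_sub_C_pow_mul_X_pow, Nat.add_sub_cancel' (Nat.lt_succ_iff.mp (mem_range.mp hk))]

theorem coeff_jacobiPoly (α β : ℝ) (n : ℕ) :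
    (jacobiPoly α β n).coeff n = ∑ k ∈ range (n + 1), jacobiCoeff α β n k := by
  rw [jacobiPoly, finsetSum_coeff]
  refine sum_congr rfl fun k hk => ?_
  have hdeg := natDegree_X_sub_C_pow_mul_X_pow (1 : ℝ) k (n - k)
  rw [Nat.add_sub_cancel' (Nat.lt_succ_iff.mp (mem_range.mp hk))] at hdeg
  have hcoeff := (monic_X_sub_C_pow_mul_X_pow (1 : ℝ) k (n - k)).coeff_natDegree
  rw [hdeg] at hcoeff
  rw [coeff_C_mul, hcoeff, mul_one]

theorem sum_jacobiCoeff (hα : -1 < α) (hβ : -1 < β) (n : ℕ) :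
    ∑ k ∈ range (n + 1), jacobiCoeff α β n k = Ring.choose (2 * n + α + β) n := by
  rw [show (2 * n + α + β : ℝ) = (n + β) + (n + α) by ring, Ring.add_choose_eq n (.all _ _),
    Nat.sum_antidiagonal_eq_sum_range_succ_mk]
  refine sum_congr rfl fun k hk => ?_
  have hkn : k ≤ n := Nat.lt_succ_iff.mp (mem_range.mp hk)
  have hk : (k : ℝ) ≤ n := by exact_mod_cast hkn
  rw [jacobiCoeff, Real.choose_eq_Gamma_div (by linarith), Real.choose_eq_Gamma_div
    (by push_cast [hkn]; linarith), show (n : ℝ) + α - (n - k : ℕ) + 1 = α + k + 1 by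
    push_cast [hkn]; ring]
  ring

theorem integral_jacobi_mul_jacobi_mul_jweight (hα : -1 < α) (hβ : -1 < β) {n : ℕ}
    (hn : 1 ≤ n) :
    ∫ x in (-1 : ℝ)..1, jacobi α β n x * jacobi α β n x * jweight α β x
      = gamJ α β n := by
  have hn' : (1 : ℝ) ≤ n := by exact_mod_cast hn
  have h := integral_eval_mul_jacobi_mul_jweight hα hβ (natDegree_jacobiPoly_le α β n)
  simp_rw [← jacobi_eq_eval_jacobiPoly] at h
  rw [h, coeff_jacobiPoly, sum_jacobiCoeff hα hβ, Real.choose_eq_Gamma_div (by linarith),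
    show 2 * (n : ℝ) + α + β - n + 1 = n + α + β + 1 by ring,
    show 2 * (n : ℝ) + α + β + 2 = (2 * n + α + β + 1) + 1 by ring,
    Real.Gamma_add_one (s := 2 * n + α + β + 1) (by linarith), gamJ]
  have : Real.Gamma (2 * n + α + β + 1) ≠ 0 := (Real.Gamma_pos_of_pos (by linarith)).ne'
  field_simp

theorem gamJ_pos (hα : -1 < α) (hβ : -1 < β) {n : ℕ} (hn : 1 ≤ n) : 0 < gamJ α β n := by
  have hn' : (1 : ℝ) ≤ n := by exact_mod_cast hn
  unfold gamJ
  have := Real.Gamma_pos_of_pos (by linarith : (0 : ℝ) < n + α + 1)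
  have := Real.Gamma_pos_of_pos (by linarith : (0 : ℝ) < n + β + 1)
  have := Real.Gamma_pos_of_pos (by linarith : (0 : ℝ) < n + α + β + 1)
  have : (0 : ℝ) < 2 * n + α + β + 1 := by linarith
  positivity

theorem integral_chebT_sq_mul_jweight_le (hα : -1 < α) (hβ : -1 < β) (m : ℕ) :
    ∫ x in (-1 : ℝ)..1, chebT m x * chebT m x * jweight α β x ≤ gamJ0 α β := by
  rw [← integral_jweight hα hβ]
  refine intervalIntegral.integral_mono_on (by norm_num)
    (intervalIntegrable_mul_jweight hα hβ (by fun_prop))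
    (by simpa using intervalIntegrable_mul_jweight hα hβ (g := fun _ => 1) continuous_const)
    fun x hx => ?_
  have hT : |chebT m x| ≤ 1 := Chebyshev.abs_eval_T_real_le_one _ (abs_le.mpr hx)
  refine mul_le_of_le_one_left (jweight_nonneg α β hx) ?_
  rw [← abs_mul_abs_self]
  exact mul_le_one₀ hT (abs_nonneg _) hT

theorem integral_chebU_mul_jacobi_mul_jweight_eq_two_mul (hα : -1 < α) (hβ : -1 < β) {n m : ℕ}
    (hn : 1 ≤ n) (hm : m < n + 2) :
    ∫ x in (-1 : ℝ)..1, chebU m x * jacobi α β n x * jweight α β x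
      = 2 * ∫ x in (-1 : ℝ)..1, chebT m x * jacobi α β n x * jweight α β x := by
  have hU : ∀ x, chebU m x * jacobi α β n x * jweight α β x
      = 2 * (chebT m x * jacobi α β n x * jweight α β x)
        + (Chebyshev.U ℝ ((m : ℤ) - 2)).eval x * jacobi α β n x * jweight α β x := by
    intro x
    have h := Chebyshev.U_eq_two_mul_T_add_U ℝ ((m : ℤ) - 2)
    rw [sub_add_cancel] at h
    simp only [chebU, chebT, h, eval_add, eval_mul, eval_ofNat]
    ring
  have hdeg : (Chebyshev.U ℝ ((m : ℤ) - 2)).natDegree < n := by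
    rw [Chebyshev.natDegree_U]; omega
  simp_rw [hU]
  rw [intervalIntegral.integral_add
      ((intervalIntegrable_mul_jweight hα hβ (by fun_prop)).const_mul _)
      (intervalIntegrable_mul_jweight hα hβ (by fun_prop)),
    intervalIntegral.integral_const_mul,
    integral_eval_mul_jacobi_mul_jweight_of_natDegree_lt hα hβ hdeg, add_zero]

end Jacobi

/-- `|σ_{n,j}^{α,β}| ≤ 2√(γ_0^{α,β}/γ_n^{α,β})` for `n ≥ 1`, `j ∈ {0,1}`. -/
theorem stmt10 (α β : ℝ) (hα : -1 < α) (hβ : -1 < β)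
    (n : ℕ) (hn : 1 ≤ n) (j : ℕ) (hj : j = 0 ∨ j = 1) :
    |sigmaJ α β n j| ≤ 2 * Real.sqrt (gamJ0 α β / gamJ α β n) := by
  set B := ∫ x in (-1 : ℝ)..1, chebT (n + j) x * jacobi α β n x * jweight α β x
  have hγ := gamJ_pos hα hβ hn
  have hσ : sigmaJ α β n j = 2 * (B / gamJ α β n) := by
    rw [sigmaJ, integral_chebU_mul_jacobi_mul_jweight_eq_two_mul hα hβ hn (by omega)]
    ring
  have hB : B ^ 2 ≤ gamJ0 α β * gamJ α β n := by
    calc B ^ 2 ≤ (∫ x in (-1 : ℝ)..1, chebT (n + j) x * chebT (n + j) x * jweight α β x)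
          * ∫ x in (-1 : ℝ)..1, jacobi α β n x * jacobi α β n x * jweight α β x :=
          sq_integral_mul_mul_le (by norm_num) (fun x hx => jweight_nonneg α β hx)
            (intervalIntegrable_mul_jweight hα hβ (by fun_prop))
            (intervalIntegrable_mul_jweight hα hβ (by fun_prop))
            (intervalIntegrable_mul_jweight hα hβ (by fun_prop))
      _ ≤ gamJ0 α β * gamJ α β n := by
          rw [integral_jacobi_mul_jacobi_mul_jweight hα hβ hn]
          exact mul_le_mul_of_nonneg_right (integral_chebT_sq_mul_jweight_le hα hβ _) hγ.le
  rw [hσ, abs_mul, abs_two]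
  refine mul_le_mul_of_nonneg_left (Real.abs_le_sqrt ?_) zero_le_two
  rw [div_pow, div_le_div_iff₀ (by positivity) hγ]
  calc B ^ 2 * gamJ α β n ≤ gamJ0 α β * gamJ α β n * gamJ α β n :=
        mul_le_mul_of_nonneg_right hB hγ.le
    _ = gamJ0 α β * gamJ α β n ^ 2 := by ring

end
end

section
/- Let ρ > 1 and u ∈ A_ρ. Define the second-kind Chebyshev expansion coefficients û_n^U = (2/π) ∫_{−1}^1 u(x) U_n(x) √(1−x²) dx. Then |û_n^U| ≤ (M/ρⁿ)(1 + ρ^{−2}) for every integer n ≥ 0. -/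
noncomputable section

/-!
Substituting `x = cos θ` turns the coefficient into `(1/π) ∫₀^π u(cos θ) (cos nθ - cos (n+2)θ) dθ
= (L n - L (n+2)) / (2π)`, where `L m = ∫₀^{2π} u(cos θ) e^{-imθ} dθ`. Under `z = e^{iθ}`, `L m` is
the contour integral of `u((z + z⁻¹)/2) z^{-m-1}` over the unit circle. The Joukowski map sends the
annulus `1 ≤ |z| ≤ ρ` into the Bernstein region, so the contour can be pushed out to `|z| = ρ`,
where `(z + z⁻¹)/2` runs over `E_ρ` and the integrand is at most `M ρ^{-m-1}`; hence
`|L m| ≤ 2π M ρ^{-m}`.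
-/

open Real Metric Set intervalIntegral
open Complex (I)

def joukowski (z : ℂ) : ℂ := (z + z⁻¹) / 2

theorem joukowski_circleMap_zero (R θ : ℝ) : joukowski (circleMap 0 R θ) = bcurve R θ := by
  rw [joukowski, bcurve, circleMap_zero, mul_inv, ← Complex.exp_neg, neg_mul]

theorem joukowski_circleMap_zero_one (θ : ℝ) : joukowski (circleMap 0 1 θ) = cos θ := by
  rw [joukowski_circleMap_zero, bcurve, Complex.ofReal_cos, Complex.cos]
  simp only [Complex.ofReal_one, one_mul, inv_one, neg_mul]

theorem joukowski_mem_bernsteinSet {ρ : ℝ} {z : ℂ} (h1 : 1 ≤ ‖z‖) (hρ : ‖z‖ ≤ ρ) :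
    joukowski z ∈ bernsteinSet ρ :=
  ⟨z, h1, hρ, rfl⟩

theorem ofReal_mem_bernsteinSet {ρ : ℝ} (hρ : 1 ≤ ρ) {x : ℝ} (hx : x ∈ Icc (-1) 1) :
    (x : ℂ) ∈ bernsteinSet ρ := by
  rw [← Real.cos_arccos hx.1 hx.2, ← joukowski_circleMap_zero_one]
  exact joukowski_mem_bernsteinSet (by simp) (by simpa using hρ)

theorem InA.differentiableAt {ρ : ℝ} {u : ℂ → ℂ} (hu : InA ρ u) {z : ℂ}
    (hz : z ∈ bernsteinSet ρ) : DifferentiableAt ℂ u z := by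
  obtain ⟨s, hs, hsub, hd⟩ := hu
  exact hd.differentiableAt (hs.mem_nhds (hsub hz))

theorem InA.differentiableAt_comp_joukowski {ρ : ℝ} {u : ℂ → ℂ} (hu : InA ρ u) {z : ℂ}
    (h1 : 1 ≤ ‖z‖) (hρ : ‖z‖ ≤ ρ) : DifferentiableAt ℂ (fun z => u (joukowski z)) z := by
  have hz : z ≠ 0 := norm_pos_iff.mp (by linarith)
  exact (hu.differentiableAt (joukowski_mem_bernsteinSet h1 hρ)).comp z
    ((differentiableAt_id.add (differentiableAt_inv hz)).div_const 2)

theorem InA.continuousOn_Icc {ρ : ℝ} (hρ : 1 ≤ ρ) {u : ℂ → ℂ} (hu : InA ρ u) :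
    ContinuousOn (fun x : ℝ => u x) (Icc (-1) 1) := fun _ hx =>
  ((hu.differentiableAt (ofReal_mem_bernsteinSet hρ hx)).continuousAt.comp
    Complex.continuous_ofReal.continuousAt).continuousWithinAt

theorem integral_neg_one_one_eq_integral_sin_smul_comp_cos {E : Type*} [NormedAddCommGroup E]
    [NormedSpace ℝ E] (g : ℝ → E) :
    ∫ x in (-1 : ℝ)..1, g x = ∫ θ in 0..π, sin θ • g (cos θ) := by
  have h := integral_deriv_smul_comp_of_deriv_nonpos (g := g) (a := 0) (b := π)
    continuous_cos.continuousOn (fun θ _ => hasDerivAt_cos θ)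
    fun θ hθ => by
      rw [min_eq_left pi_pos.le, max_eq_right pi_pos.le] at hθ
      exact neg_nonpos.mpr (sin_nonneg_of_nonneg_of_le_pi hθ.1.le hθ.2.le)
  rw [cos_zero, cos_pi] at h
  rw [integral_symm, ← h, ← integral_neg]
  simp [neg_smul]

theorem integral_mul_chebU_mul_sqrt_eq_integral_sin_mul_sin (g : ℝ → ℂ) (n : ℕ) :
    ∫ x in (-1 : ℝ)..1, g x * (chebU n x : ℂ) * (√(1 - x ^ 2) : ℂ) =
      ∫ θ in 0..π, g (cos θ) * (sin ((n + 1) * θ) * sin θ : ℝ) := by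
  rw [integral_neg_one_one_eq_integral_sin_smul_comp_cos]
  refine integral_congr fun θ hθ => ?_
  rw [uIcc_of_le pi_pos.le] at hθ
  have hsqrt : √(1 - cos θ ^ 2) = sin θ := by
    rw [← sin_sq, sqrt_sq (sin_nonneg_of_nonneg_of_le_pi hθ.1 hθ.2)]
  have hU : chebU n (cos θ) * sin θ = sin ((n + 1) * θ) := by
    simp [chebU]
  simp only [hsqrt, Complex.real_smul, ← hU]
  push_cast
  ring

theorem ContinuousOn.continuous_comp_cos {E : Type*} [TopologicalSpace E] {g : ℝ → E}
    (hg : ContinuousOn g (Icc (-1) 1)) : Continuous fun θ => g (cos θ) :=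
  hg.comp_continuous continuous_cos fun θ => ⟨neg_one_le_cos θ, cos_le_one θ⟩

theorem integral_comp_cos_mul_sin_mul_sin {g : ℝ → ℂ} (hg : ContinuousOn g (Icc (-1) 1)) (n : ℝ) :
    ∫ θ in 0..π, g (cos θ) * (sin ((n + 1) * θ) * sin θ : ℝ) =
      ((∫ θ in 0..π, g (cos θ) * (cos (n * θ) : ℝ)) -
        ∫ θ in 0..π, g (cos θ) * (cos ((n + 2) * θ) : ℝ)) / 2 := by
  have hint : ∀ c : ℝ,
      IntervalIntegrable (fun θ => g (cos θ) * (cos (c * θ) : ℝ)) MeasureTheory.volume 0 π :=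
    fun c => (hg.continuous_comp_cos.mul (by fun_prop)).intervalIntegrable 0 π
  rw [← integral_sub (hint n) (hint (n + 2)), ← integral_div]
  refine integral_congr fun θ _ => ?_
  have h : sin ((n + 1) * θ) * sin θ = (cos (n * θ) - cos ((n + 2) * θ)) / 2 := by
    rw [show n * θ = (n + 1) * θ - θ by ring, show (n + 2) * θ = (n + 1) * θ + θ by ring,
      cos_sub, cos_add]
    ring
  simp only [h]
  push_cast
  ring

theorem integral_comp_cos_mul_exp_neg {g : ℝ → ℂ} (hg : ContinuousOn g (Icc (-1) 1)) (m : ℤ) :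
    ∫ θ in 0..2 * π, g (cos θ) * Complex.exp (-(m * θ * I)) =
      2 * ∫ θ in 0..π, g (cos θ) * (cos (m * θ) : ℝ) := by
  have hint : ∀ {f : ℝ → ℂ}, Continuous f → ∀ a b : ℝ,
      IntervalIntegrable (fun θ => g (cos θ) * f θ) MeasureTheory.volume a b :=
    fun hf a b => (hg.continuous_comp_cos.mul hf).intervalIntegrable a b
  have hreflect : ∫ θ in π..2 * π, g (cos θ) * Complex.exp (-(m * θ * I)) =
      ∫ θ in 0..π, g (cos θ) * Complex.exp (m * θ * I) := by
    have h := integral_comp_sub_left (a := 0) (b := π)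
      (fun θ => g (cos θ) * Complex.exp (-(m * θ * I))) (2 * π)
    rw [show 2 * π - π = π by ring, sub_zero] at h
    rw [← h]
    refine integral_congr fun θ _ => ?_
    have : -((m : ℂ) * ↑(2 * π - θ) * I) = m * θ * I + (-m : ℤ) * (2 * π * I) := by
      push_cast
      ring
    simp only [cos_two_pi_sub, this, Complex.exp_add, Complex.exp_int_mul_two_pi_mul_I, mul_one]
  rw [← integral_add_adjacent_intervals (hint (by fun_prop) 0 π) (hint (by fun_prop) π (2 * π)),
    hreflect, ← integral_add (hint (by fun_prop) 0 π) (hint (by fun_prop) 0 π),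
    ← integral_const_mul]
  refine integral_congr fun θ _ => ?_
  rw [Complex.ofReal_cos, Complex.cos]
  push_cast
  ring_nf

theorem circleIntegral_mul_zpow_neg_succ (f : ℂ → ℂ) {R : ℝ} (hR : R ≠ 0) (m : ℤ) :
    (∮ z in C(0, R), f z * z ^ (-(m + 1))) =
      I * (R : ℂ) ^ (-m) * ∫ θ in 0..2 * π, f (circleMap 0 R θ) * Complex.exp (-(m * θ * I)) := by
  rw [circleIntegral, ← integral_const_mul]
  refine integral_congr fun θ _ => ?_
  have hR' : (R : ℂ) ≠ 0 := Complex.ofReal_ne_zero.mpr hR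
  have hpow : circleMap 0 R θ ^ (-(m + 1)) =
      (R : ℂ) ^ (-m) * (R : ℂ)⁻¹ * (Complex.exp (-(θ * I)) * Complex.exp (-(m * θ * I))) := by
    rw [circleMap_zero, mul_zpow, ← Complex.exp_int_mul, neg_add, zpow_add₀ hR', zpow_neg_one,
      ← Complex.exp_add]
    push_cast
    ring_nf
  rw [deriv_circleMap, smul_eq_mul, hpow, circleMap_zero, Complex.exp_neg (θ * I)]
  field_simp

theorem InA.integral_comp_cos_mul_exp_neg_eq_integral_bcurve {ρ : ℝ} (hρ : 1 ≤ ρ) {u : ℂ → ℂ}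
    (hu : InA ρ u) (m : ℤ) :
    ∫ θ in 0..2 * π, u (cos θ) * Complex.exp (-(m * θ * I)) =
      (ρ : ℂ) ^ (-m) * ∫ θ in 0..2 * π, u (bcurve ρ θ) * Complex.exp (-(m * θ * I)) := by
  set F : ℂ → ℂ := fun z => u (joukowski z) * z ^ (-(m + 1))
  have hF : ∀ z : ℂ, 1 ≤ ‖z‖ → ‖z‖ ≤ ρ → DifferentiableAt ℂ F z := fun z h1 hρ =>
    (hu.differentiableAt_comp_joukowski h1 hρ).mul
      (differentiableAt_zpow.mpr (Or.inl (norm_pos_iff.mp (by linarith))))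
  have hshift : (∮ z in C(0, ρ), F z) = ∮ z in C(0, 1), F z :=
    Complex.circleIntegral_eq_of_differentiable_on_annulus_off_countable one_pos hρ countable_empty
      (fun z hz => by
        simp only [mem_sdiff, mem_closedBall, mem_ball, dist_zero_right, not_lt] at hz
        exact (hF z hz.2 hz.1).continuousAt.continuousWithinAt)
      (fun z hz => by
        simp only [mem_sdiff, mem_closedBall, mem_ball, dist_zero_right, not_le] at hz
        exact hF z hz.1.2.le hz.1.1.le)
  simp only [F, circleIntegral_mul_zpow_neg_succ _ one_ne_zero,
    circleIntegral_mul_zpow_neg_succ _ (by linarith : ρ ≠ 0), Complex.ofReal_one, one_zpow,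
    mul_one, joukowski_circleMap_zero_one] at hshift
  simp only [joukowski_circleMap_zero] at hshift
  rw [← mul_right_inj' Complex.I_ne_zero, ← hshift, mul_assoc]

theorem InA.norm_integral_comp_cos_mul_exp_neg_le {ρ : ℝ} (hρ : 1 ≤ ρ) {u : ℂ → ℂ}
    (hu : InA ρ u) {M : ℝ} (hM : ∀ θ ∈ Icc 0 (2 * π), ‖u (bcurve ρ θ)‖ ≤ M) (m : ℤ) :
    ‖∫ θ in 0..2 * π, u (cos θ) * Complex.exp (-(m * θ * I))‖ ≤ 2 * π * M * ρ ^ (-m) := by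
  have hbound : ‖∫ θ in 0..2 * π, u (bcurve ρ θ) * Complex.exp (-(m * θ * I))‖ ≤ M * |2 * π - 0| :=
    norm_integral_le_of_norm_le_const fun θ hθ => by
      rw [norm_mul, Complex.norm_exp]
      simpa using hM θ (Ioc_subset_Icc_self (by simpa [two_pi_pos.le] using hθ))
  rw [hu.integral_comp_cos_mul_exp_neg_eq_integral_bcurve hρ, norm_mul, norm_zpow,
    Complex.norm_real, Real.norm_of_nonneg (by linarith)]
  rw [sub_zero, abs_of_pos two_pi_pos] at hbound
  calc ρ ^ (-m) * ‖_‖ ≤ ρ ^ (-m) * (M * (2 * π)) := by gcongr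
    _ = 2 * π * M * ρ ^ (-m) := by ring

theorem integral_mul_chebU_mul_sqrt_eq_sub_integral_exp {g : ℝ → ℂ}
    (hg : ContinuousOn g (Icc (-1) 1)) (n : ℕ) :
    ∫ x in (-1 : ℝ)..1, g x * (chebU n x : ℂ) * (√(1 - x ^ 2) : ℂ) =
      ((∫ θ in 0..2 * π, g (cos θ) * Complex.exp (-((n : ℤ) * θ * I))) -
        ∫ θ in 0..2 * π, g (cos θ) * Complex.exp (-((n + 2 : ℤ) * θ * I))) / 4 := by
  rw [integral_mul_chebU_mul_sqrt_eq_integral_sin_mul_sin, integral_comp_cos_mul_sin_mul_sin hg,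
    integral_comp_cos_mul_exp_neg hg, integral_comp_cos_mul_exp_neg hg]
  push_cast
  ring

/-- bound for the second-kind Chebyshev expansion coefficients. -/
theorem stmt12 (ρ : ℝ) (hρ : 1 < ρ) (u : ℂ → ℂ) (hu : InA ρ u) (M : ℝ)
    (hM : ∀ θ ∈ Set.Icc (0 : ℝ) (2 * Real.pi), ‖u (bcurve ρ θ)‖ ≤ M)
    (n : ℕ) :
    ‖((2 / Real.pi : ℝ) : ℂ) *
        ∫ x in (-1 : ℝ)..1, u x * (chebU n x : ℝ) * (Real.sqrt (1 - x ^ 2) : ℝ)‖ ≤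
      M / ρ ^ n * (1 + ρ⁻¹ ^ 2) := by
  rw [integral_mul_chebU_mul_sqrt_eq_sub_integral_exp (hu.continuousOn_Icc hρ.le) n]
  set A := ∫ θ in 0..2 * π, u (cos θ) * Complex.exp (-((n : ℤ) * θ * I))
  set B := ∫ θ in 0..2 * π, u (cos θ) * Complex.exp (-((n + 2 : ℤ) * θ * I))
  have hA : ‖A‖ ≤ 2 * π * M * ρ ^ (-(n : ℤ)) := hu.norm_integral_comp_cos_mul_exp_neg_le hρ.le hM n
  have hB : ‖B‖ ≤ 2 * π * M * ρ ^ (-(n + 2 : ℤ)) :=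
    hu.norm_integral_comp_cos_mul_exp_neg_le hρ.le hM (n + 2)
  calc ‖((2 / π : ℝ) : ℂ) * ((A - B) / 4)‖ ≤ 2 / π * ((‖A‖ + ‖B‖) / 4) := by
        rw [norm_mul, norm_div, Complex.norm_real, Real.norm_of_nonneg (by positivity),
          Complex.norm_ofNat]
        gcongr
        exact norm_sub_le A B
    _ ≤ 2 / π * ((2 * π * M * ρ ^ (-(n : ℤ)) + 2 * π * M * ρ ^ (-(n + 2 : ℤ))) / 4) := by
        gcongr
    _ = M / ρ ^ n * (1 + ρ⁻¹ ^ 2) := by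
        rw [neg_add, zpow_add₀ (by positivity), zpow_neg, zpow_natCast, zpow_neg, zpow_ofNat]
        field_simp
        ring
end
end
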